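/- arXiv:1401.2958 — 4 statements merged into one kernel-verified Lean document; each statement's English description precedes it below -/
import Mathlib

section
/- Let ε>0, let u ∈ L²(0,∞) be continuous and let P ∈ C²([0,∞)) satisfy −εP''(x) + P'(x) = u(x) for all x>0 together with P(0)=0 and P(x) → 0, P'(x) → 0 as x → ∞. Then the identity ε²‖P''‖²_{L²(0,∞)} + ε(P'(0))² + ‖P'‖²_{L²(0,∞)} = ‖u‖²_{L²(0,∞)} holds. -/
open MeasureTheory Filter Set

/-!
Squaring the equation gives `u² = ε² P''² + P'² - ε (P'²)'`, so on `[0, R]`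
`∫ (ε² P''² + P'²) = ∫ u² + ε P'(R)² - ε P'(0)²`. The right-hand side converges as `R → ∞`
because `u ∈ L²` and `P' → 0`; since the left-hand integrand is nonnegative, it is then
integrable on `(0, ∞)` with the limiting integral, and so are both of its summands.
-/

theorem intervalIntegral_sq_add_sq_deriv_eq {f u : ℝ → ℝ} {a b : ℝ} (ε : ℝ)
    (hf : ContDiff ℝ 1 f) (heq : ∀ x ∈ uIoc a b, -ε * deriv f x + f x = u x) :
    ∫ x in a..b, (ε ^ 2 * deriv f x ^ 2 + f x ^ 2)
      = (∫ x in a..b, u x ^ 2) + ε * f b ^ 2 - ε * f a ^ 2 := by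
  have hf'_cont : Continuous (deriv f) := hf.continuous_deriv le_rfl
  have hf_deriv : ∀ x, HasDerivAt f (deriv f x) x :=
    fun x => (hf.differentiable one_ne_zero x).hasDerivAt
  have hparts : ∫ x in a..b, deriv f x * f x + f x * deriv f x = f b * f b - f a * f a :=
    intervalIntegral.integral_deriv_mul_eq_sub (fun x _ => hf_deriv x) (fun x _ => hf_deriv x)
      (hf'_cont.intervalIntegrable a b) (hf'_cont.intervalIntegrable a b)
  have hu : ∫ x in a..b, (-ε * deriv f x + f x) ^ 2 = ∫ x in a..b, u x ^ 2 :=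
    intervalIntegral.integral_congr_ae (ae_of_all _ fun x hx => by rw [heq x hx])
  have hsquare : (fun x => ε ^ 2 * deriv f x ^ 2 + f x ^ 2)
      = fun x => (-ε * deriv f x + f x) ^ 2 + ε * (deriv f x * f x + f x * deriv f x) := by
    ext x
    ring
  rw [hsquare, intervalIntegral.integral_add, intervalIntegral.integral_const_mul, hparts, hu]
  · ring
  · exact (((hf'_cont.const_smul (-ε)).add hf.continuous).pow 2).intervalIntegrable a b
  · exact (((hf'_cont.mul hf.continuous).add (hf.continuous.mul hf'_cont)).const_smul ε)
      |>.intervalIntegrable a b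

theorem integrableOn_Ioi_and_integral_eq_of_tendsto_intervalIntegral_of_nonneg
    {f : ℝ → ℝ} {a I : ℝ} (hf : ∀ b, IntervalIntegrable f volume a b)
    (hf_nonneg : ∀ x ∈ Ioi a, 0 ≤ f x)
    (hlim : Tendsto (fun b => ∫ x in a..b, f x) atTop (nhds I)) :
    IntegrableOn f (Ioi a) ∧ ∫ x in Ioi a, f x = I := by
  have hnorm : (fun b => ∫ x in a..b, f x) =ᶠ[atTop] fun b => ∫ x in a..b, ‖f x‖ := by
    filter_upwards [eventually_ge_atTop a] with b hb
    refine intervalIntegral.integral_congr_ae (ae_of_all _ fun x hx => ?_)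
    rw [uIoc_of_le hb] at hx
    exact (Real.norm_of_nonneg (hf_nonneg x hx.1)).symm
  have hint : IntegrableOn f (Ioi a) :=
    integrableOn_Ioi_of_intervalIntegral_norm_tendsto I a (fun b => (hf b).1) tendsto_id
      (hlim.congr' hnorm)
  exact ⟨hint, tendsto_nhds_unique (intervalIntegral_tendsto_integral_Ioi a hint tendsto_id) hlim⟩

theorem elliptic_energy_identity_halfline_general
    (ε : ℝ) (u P : ℝ → ℝ)
    (huL2 : IntegrableOn (fun x => u x ^ 2) (Set.Ioi 0))
    (hP : ContDiff ℝ 2 P)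
    (heq : ∀ x > (0:ℝ), -ε * deriv (deriv P) x + deriv P x = u x)
    (hP'lim : Tendsto (deriv P) atTop (nhds 0)) :
    ε ^ 2 * (∫ x in Set.Ioi (0:ℝ), (deriv (deriv P) x) ^ 2)
      + ε * (deriv P 0) ^ 2
      + (∫ x in Set.Ioi (0:ℝ), (deriv P x) ^ 2)
      = ∫ x in Set.Ioi (0:ℝ), (u x) ^ 2 := by
  have hP' : ContDiff ℝ 1 (deriv P) := hP.deriv'
  have hP''_cont : Continuous (deriv (deriv P)) := hP'.continuous_deriv le_rfl
  have hlim : Tendsto (fun R => ∫ x in (0:ℝ)..R, (ε ^ 2 * deriv (deriv P) x ^ 2 + deriv P x ^ 2))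
      atTop (nhds ((∫ x in Ioi (0:ℝ), u x ^ 2) - ε * deriv P 0 ^ 2)) := by
    have h := ((intervalIntegral_tendsto_integral_Ioi 0 huL2 tendsto_id).add
      ((hP'lim.pow 2).const_mul ε)).sub_const (ε * deriv P 0 ^ 2)
    rw [zero_pow two_ne_zero, mul_zero, add_zero] at h
    refine h.congr' ?_
    filter_upwards [eventually_ge_atTop 0] with R hR
    refine (intervalIntegral_sq_add_sq_deriv_eq ε hP' fun x hx => ?_).symm
    exact heq x ((le_min le_rfl hR).trans_lt hx.1)
  have hsq''_cont : Continuous fun x => ε ^ 2 * deriv (deriv P) x ^ 2 :=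
    (hP''_cont.pow 2).const_mul _
  obtain ⟨hE_int, hE_integral⟩ :=
    integrableOn_Ioi_and_integral_eq_of_tendsto_intervalIntegral_of_nonneg
      (f := fun x => ε ^ 2 * deriv (deriv P) x ^ 2 + deriv P x ^ 2)
      (fun R => (hsq''_cont.add (hP'.continuous.pow 2)).intervalIntegrable 0 R)
      (fun x _ => by positivity) hlim
  obtain ⟨hint'', hint'⟩ := (integrable_add_iff_of_nonneg
    (g := fun x => deriv P x ^ 2) hsq''_cont.aestronglyMeasurable
    (ae_of_all _ fun x => by positivity) (ae_of_all _ fun x => by positivity)).mp hE_int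
  rw [← integral_const_mul, add_right_comm, ← integral_add hint'' hint', hE_integral]
  ring

/-- Energy identity for the elliptic equation `-ε P'' + P' = u`
on the half-line `(0,∞)`, with `P(0) = 0` and `P, P' → 0` at `+∞`:
`ε² ‖P''‖²_{L²(0,∞)} + ε (P'(0))² + ‖P'‖²_{L²(0,∞)} = ‖u‖²_{L²(0,∞)}`. -/
theorem elliptic_energy_identity_halfline
    (ε : ℝ) (hε : 0 < ε) (u P : ℝ → ℝ)
    (hu_cont : Continuous u)
    (huL2 : IntegrableOn (fun x => u x ^ 2) (Set.Ioi 0))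
    (hP : ContDiff ℝ 2 P)
    (heq : ∀ x > (0:ℝ), -ε * deriv (deriv P) x + deriv P x = u x)
    (hP0 : P 0 = 0)
    (hPlim : Tendsto P atTop (nhds 0))
    (hP'lim : Tendsto (deriv P) atTop (nhds 0)) :
    ε ^ 2 * (∫ x in Set.Ioi (0:ℝ), (deriv (deriv P) x) ^ 2)
      + ε * (deriv P 0) ^ 2
      + (∫ x in Set.Ioi (0:ℝ), (deriv P x) ^ 2)
      = ∫ x in Set.Ioi (0:ℝ), (u x) ^ 2 :=
  elliptic_energy_identity_halfline_general ε u P huL2 hP heq hP'lim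
end

section
/- Let γ>0, ε ∈ (0,1) and let (u_ε,P_ε) be a smooth solution of the viscous short pulse system on the half-line. Then for each t>0: √ε ‖∂ₓP_ε(t,·)‖_{L∞(0,∞)} ≤ ‖u_ε(t,·)‖_{L²(0,∞)}. -/
open MeasureTheory Filter Set

/-- The viscous short pulse system on the half-line `(0,∞)`:
`∂ₜu − (1/2)u²∂ₓu = γP + ε∂ₓₓu`, `−ε∂ₓₓP + ∂ₓP = u`, with homogeneous
boundary conditions `u(t,0) = P(t,0) = 0`, `u(t,·), ∂ₓu(t,·) ∈ L²(0,∞)` and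
decay of `u, ∂ₓu, P, ∂ₓP` as `x → ∞`.  The functions `ut, ux, uxx, Px, Pxx`
are the indicated partial derivatives of `u` and `P`. -/
structure ViscousSPEHalf (γ ε : ℝ) (u P ut ux uxx Px Pxx : ℝ → ℝ → ℝ) : Prop where
  hut : ∀ t x : ℝ, HasDerivAt (fun τ => u τ x) (ut t x) t
  hux : ∀ t x : ℝ, HasDerivAt (fun y => u t y) (ux t x) x
  huxx : ∀ t x : ℝ, HasDerivAt (fun y => ux t y) (uxx t x) x
  hPx : ∀ t x : ℝ, HasDerivAt (fun y => P t y) (Px t x) x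
  hPxx : ∀ t x : ℝ, HasDerivAt (fun y => Px t y) (Pxx t x) x
  hequ : ∀ t > (0:ℝ), ∀ x > (0:ℝ),
    ut t x - 1 / 2 * (u t x) ^ 2 * ux t x = γ * P t x + ε * uxx t x
  heqP : ∀ t > (0:ℝ), ∀ x > (0:ℝ), -ε * Pxx t x + Px t x = u t x
  hbu : ∀ t : ℝ, u t 0 = 0
  hbP : ∀ t : ℝ, P t 0 = 0
  huL2 : ∀ t > (0:ℝ), MeasureTheory.IntegrableOn (fun x => (u t x) ^ 2) (Set.Ioi 0)
  huxL2 : ∀ t > (0:ℝ), MeasureTheory.IntegrableOn (fun x => (ux t x) ^ 2) (Set.Ioi 0)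
  hdu : ∀ t > (0:ℝ), Filter.Tendsto (fun x => u t x) Filter.atTop (nhds 0)
  hdux : ∀ t > (0:ℝ), Filter.Tendsto (fun x => ux t x) Filter.atTop (nhds 0)
  hdP : ∀ t > (0:ℝ), Filter.Tendsto (fun x => P t x) Filter.atTop (nhds 0)
  hdPx : ∀ t > (0:ℝ), Filter.Tendsto (fun x => Px t x) Filter.atTop (nhds 0)

/-- For each `t > 0`,
`√ε ‖∂ₓP_ε(t,·)‖_{L∞(0,∞)} ≤ ‖u_ε(t,·)‖_{L²(0,∞)}` (stated pointwise in `x`,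
which is equivalent for the continuous function `∂ₓP_ε(t,·)`). -/
theorem viscous_SPE_halfline_Px_Linfty
    (γ ε : ℝ) (hγ : 0 < γ) (hε : ε ∈ Set.Ioo (0:ℝ) 1)
    (u P ut ux uxx Px Pxx : ℝ → ℝ → ℝ)
    (h : ViscousSPEHalf γ ε u P ut ux uxx Px Pxx) :
    ∀ t > (0:ℝ), ∀ x ≥ (0:ℝ),
      Real.sqrt ε * |Px t x|
        ≤ Real.sqrt (∫ y in Set.Ioi (0:ℝ), (u t y) ^ 2) := by
  intro t ht
  set I : ℝ := ∫ y in Set.Ioi (0:ℝ), (u t y) ^ 2 with hI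
  have hε0 : 0 < ε := hε.1
  have hInn : 0 ≤ I := by
    apply MeasureTheory.setIntegral_nonneg measurableSet_Ioi
    intro y _; positivity
  have hucont : Continuous fun y => u t y :=
    Differentiable.continuous fun y => (h.hux t y).differentiableAt
  have hPxcont : Continuous fun y => Px t y :=
    Differentiable.continuous fun y => (h.hPxx t y).differentiableAt
  -- key estimate: ε (Px t x)^2 ≤ I for x ≥ 0
  have key : ∀ x ≥ (0:ℝ), ε * (Px t x) ^ 2 ≤ I := by
    have keypos : ∀ x > (0:ℝ), ε * (Px t x) ^ 2 ≤ I := by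
      intro x hx
      -- for every R ≥ x, ε Px(x)² ≤ ε Px(R)² + I
      have hbound : ∀ R ≥ x, ε * (Px t x) ^ 2 ≤ ε * (Px t R) ^ 2 + I := by
        intro R hxR
        set g : ℝ → ℝ := fun y => ε * (Px t y) ^ 2 with hg
        set g' : ℝ → ℝ := fun y => 2 * Px t y * (Px t y - u t y) with hg'
        have hderiv : ∀ y ∈ Set.uIcc x R, HasDerivAt g (g' y) y := by
          intro y hy
          have hy0 : 0 < y := by
            rcases hy with ⟨h1, _⟩
            have : min x R = x := min_eq_left hxR
            rw [this] at h1; linarith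
          have hd : HasDerivAt g (ε * (2 * Px t y * Pxx t y)) y := by
            have := ((h.hPxx t y).pow 2)
            simpa [mul_comm, mul_assoc, mul_left_comm] using this.const_mul ε
          have heq := h.heqP t ht y hy0
          have : ε * (2 * Px t y * Pxx t y) = g' y := by
            have hP : ε * Pxx t y = Px t y - u t y := by linarith
            have : ε * (2 * Px t y * Pxx t y) = 2 * Px t y * (ε * Pxx t y) := by ring
            rw [this, hP]
          rwa [this] at hd
        have hcont : ContinuousOn g' (Set.uIcc x R) :=
          (((continuous_const.mul hPxcont).mul (hPxcont.sub hucont))).continuousOn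
        have hftc : ∫ y in x..R, g' y = g R - g x :=
          intervalIntegral.integral_eq_sub_of_hasDerivAt hderiv
            (hcont.intervalIntegrable)
        have hptwise : ∀ y ∈ Set.uIcc x R, -(g' y) ≤ (u t y) ^ 2 := by
          intro y _
          have : 0 ≤ (Px t y) ^ 2 + (Px t y - u t y) ^ 2 := by positivity
          simp only [hg']; nlinarith [sq_nonneg (Px t y - u t y), sq_nonneg (Px t y)]
        have hint1 : ∫ y in x..R, -(g' y) ≤ ∫ y in x..R, (u t y) ^ 2 := by
          apply intervalIntegral.integral_mono_on hxR
          · exact (hcont.neg).intervalIntegrable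
          · exact ((hucont.pow 2).continuousOn).intervalIntegrable
          · intro y hy
            exact hptwise y (Set.mem_uIcc_of_le hy.1 hy.2)
        have hint2 : ∫ y in x..R, (u t y) ^ 2 ≤ I := by
          rw [intervalIntegral.integral_of_le hxR]
          rw [hI]
          apply MeasureTheory.setIntegral_mono_set (h.huL2 t ht)
          · filter_upwards with y using by positivity
          · apply Filter.Eventually.of_forall
            intro y hy
            exact lt_trans hx hy.1
        have : g x - g R = ∫ y in x..R, -(g' y) := by
          rw [intervalIntegral.integral_neg, hftc]; ring
        have : g x - g R ≤ I := le_trans (this ▸ hint1) hint2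
        simp only [hg] at this
        linarith
      have htend : Filter.Tendsto (fun R => ε * (Px t R) ^ 2 + I) Filter.atTop
          (nhds (ε * 0 ^ 2 + I)) := by
        exact ((((h.hdPx t ht).pow 2).const_mul ε).add tendsto_const_nhds)
      have := ge_of_tendsto htend
        (Filter.eventually_atTop.mpr ⟨x, hbound⟩)
      simpa using this
    intro x hx
    rcases eq_or_lt_of_le hx with heq | hlt
    · -- x = 0 : by continuity from the right
      subst heq
      have hc : Filter.Tendsto (fun y => ε * (Px t y) ^ 2) (nhdsWithin 0 (Set.Ioi 0))
          (nhds (ε * (Px t 0) ^ 2)) := by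
        exact ((continuous_const.mul (hPxcont.pow 2)).tendsto 0).mono_left
          nhdsWithin_le_nhds
      exact le_of_tendsto hc
        (eventually_mem_nhdsWithin.mono fun y hy => keypos y hy)
    · exact keypos x hlt
  intro x hx
  have hkx := key x hx
  have h1 : Real.sqrt ε * |Px t x| = Real.sqrt (ε * (Px t x) ^ 2) := by
    rw [Real.sqrt_mul hε0.le, Real.sqrt_sq_eq_abs]
  rw [h1]
  exact Real.sqrt_le_sqrt hkx
end

section
/- Let γ>0, ε ∈ (0,1) and let (u_ε,P_ε) be a smooth solution of the viscous short pulse system on the half-line. Then for each t>0: ∫₀^∞ u_ε(t,x)P_ε(t,x) dx ≤ ‖u_ε(t,·)‖²_{L²(0,∞)}. -/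
/-!
Write `u = -ε P'' + P'` at a fixed time. The energy `E = -ε P'² + ε P' P - P²/2` satisfies
`u² - u P - E' = ε² P''² + (1 - ε) P'² ≥ 0`, so integrating over `(0, ∞)` gives
`∫ (u² - u P) ≥ E(∞) - E(0) = ε P'(0)² ≥ 0`, using `P(0) = 0` and the decay of `P, P'`.
-/

open MeasureTheory Filter Set

open Topology

theorem sub_le_integral_Ioi_of_hasDerivAt_of_le {f f' φ : ℝ → ℝ} {a L : ℝ}
    (hcont : ContinuousOn f (Ici a)) (hderiv : ∀ x ∈ Ioi a, HasDerivAt f (f' x) x)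
    (hφ : IntegrableOn φ (Ioi a)) (hle : ∀ x ∈ Ioi a, f' x ≤ φ x)
    (hf : Tendsto f atTop (𝓝 L)) :
    L - f a ≤ ∫ x in Ioi a, φ x := by
  have hbound : ∀ᶠ b in atTop, f b - f a ≤ ∫ x in a..b, φ x := by
    filter_upwards [eventually_ge_atTop a] with b hab
    refine intervalIntegral.sub_le_integral_of_hasDeriv_right_of_le hab
      (hcont.mono Icc_subset_Ici_self) (fun x hx => (hderiv x hx.1).hasDerivWithinAt)
      ?_ (fun x hx => hle x hx.1)
    exact (integrableOn_Icc_iff_integrableOn_Ioc).mpr (hφ.mono_set Ioc_subset_Ioi_self)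
  exact le_of_tendsto_of_tendsto (hf.sub_const _)
    (intervalIntegral_tendsto_integral_Ioi a hφ tendsto_id) hbound

theorem integral_forcing_mul_le_integral_sq {ε a : ℝ} (hε : ε ∈ Icc (0 : ℝ) 1)
    {p p' p'' v : ℝ → ℝ} (hp : ∀ x, HasDerivAt p (p' x) x) (hp' : ∀ x, HasDerivAt p' (p'' x) x)
    (heq : ∀ x > a, -ε * p'' x + p' x = v x) (hpa : p a = 0)
    (hp_lim : Tendsto p atTop (𝓝 0)) (hp'_lim : Tendsto p' atTop (𝓝 0))
    (hv : IntegrableOn (fun x => v x ^ 2) (Ioi a)) :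
    ∫ x in Ioi a, v x * p x ≤ ∫ x in Ioi a, v x ^ 2 := by
  by_cases hvp : IntegrableOn (fun x => v x * p x) (Ioi a)
  swap
  · -- the left side is the Bochner junk value `0`
    rw [integral_undef hvp]
    exact integral_nonneg fun x => sq_nonneg _
  set E : ℝ → ℝ := fun x => -ε * p' x ^ 2 + ε * (p' x * p x) - p x ^ 2 / 2
  set E' : ℝ → ℝ := fun x =>
    -ε * (2 * p' x * p'' x) + ε * (p'' x * p x + p' x * p' x) - p x * p' x
  have hE : ∀ x, HasDerivAt E (E' x) x := fun x => by
    refine ((((hp' x).pow 2).const_mul (-ε)).add (((hp' x).mul (hp x)).const_mul ε)).sub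
      (((hp x).pow 2).div_const 2) |>.congr_deriv ?_
    simp only [E']
    ring
  have hE_le : ∀ x ∈ Ioi a, E' x ≤ v x ^ 2 - v x * p x := fun x hx => by
    have hdiss : v x ^ 2 - v x * p x - E' x = ε ^ 2 * p'' x ^ 2 + (1 - ε) * p' x ^ 2 := by
      rw [← heq x hx]
      ring
    rw [← sub_nonneg, hdiss]
    exact add_nonneg (by positivity) (mul_nonneg (sub_nonneg.mpr hε.2) (sq_nonneg _))
  have hE_lim : Tendsto E atTop (𝓝 0) := by
    simpa [E, neg_mul] using (((hp'_lim.pow 2).const_mul (-ε)).add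
      ((hp'_lim.mul hp_lim).const_mul ε)).sub ((hp_lim.pow 2).div_const 2)
  have hEa : E a ≤ 0 := by
    simp only [E, hpa]
    nlinarith [mul_nonneg hε.1 (sq_nonneg (p' a))]
  have key := sub_le_integral_Ioi_of_hasDerivAt_of_le (φ := fun x => v x ^ 2 - v x * p x)
    (fun x _ => (hE x).continuousAt.continuousWithinAt) (fun x _ => hE x) (hv.sub hvp) hE_le
    hE_lim
  rw [integral_sub hv hvp] at key
  linarith

theorem viscous_SPE_halfline_uP_general
    (γ ε : ℝ) (hε : ε ∈ Set.Ioo (0:ℝ) 1)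
    (u P ut ux uxx Px Pxx : ℝ → ℝ → ℝ)
    (h : ViscousSPEHalf γ ε u P ut ux uxx Px Pxx) :
    ∀ t > (0:ℝ),
      (∫ x in Set.Ioi (0:ℝ), u t x * P t x)
        ≤ ∫ x in Set.Ioi (0:ℝ), (u t x) ^ 2 := fun t ht =>
  integral_forcing_mul_le_integral_sq (Ioo_subset_Icc_self hε) (h.hPx t) (h.hPxx t)
    (h.heqP t ht) (h.hbP t) (h.hdP t ht) (h.hdPx t ht) (h.huL2 t ht)

/-- For each `t > 0`,
`∫₀^∞ u_ε(t,x) P_ε(t,x) dx ≤ ‖u_ε(t,·)‖²_{L²(0,∞)}`. -/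
theorem viscous_SPE_halfline_uP
    (γ ε : ℝ) (hγ : 0 < γ) (hε : ε ∈ Set.Ioo (0:ℝ) 1)
    (u P ut ux uxx Px Pxx : ℝ → ℝ → ℝ)
    (h : ViscousSPEHalf γ ε u P ut ux uxx Px Pxx) :
    ∀ t > (0:ℝ),
      (∫ x in Set.Ioi (0:ℝ), u t x * P t x)
        ≤ ∫ x in Set.Ioi (0:ℝ), (u t x) ^ 2 :=
  viscous_SPE_halfline_uP_general γ ε hε u P ut ux uxx Px Pxx h
end

section
/- Let γ>0, ε ∈ (0,1) and let (u_ε,P_ε) be a smooth solution of the viscous short pulse system on the real line. Then for each t>0: ∫_ℝ u_ε(t,x) dx = 0, √ε ‖∂ₓP_ε(t,·)‖_{L∞(ℝ)} ≤ ‖u_ε(t,·)‖_{L²(ℝ)}, and ∫_ℝ u_ε(t,x)P_ε(t,x) dx ≤ ‖u_ε(t,·)‖²_{L²(ℝ)}. -/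
/-!
Write `p` for `P(t,·)` and `u` for `u(t,·)`, so that `u = p' - ε p''`. Then `u` is the derivative
of `p - ε p'`, which vanishes at `±∞`, so `u` has zero mean. The energy `ε p'²` has derivative
`2 p' (p' - u) ≥ -u²`, so integrating from `x` to `+∞` gives `ε p'(x)² ≤ ‖u‖²`. Finally
`H = p²/2 - ε p' p + ε² p'²` satisfies `H' + ε u² = u p + ε (p' - u)² ≥ u p` and vanishes at `±∞`,
whence `∫ u p ≤ ε ‖u‖² ≤ ‖u‖²`.
-/

open MeasureTheory Filter Set

/-- The viscous short pulse system on the real line: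
`∂ₜu − (1/2)u²∂ₓu = γP + ε∂ₓₓu`, `−ε∂ₓₓP + ∂ₓP = u`, with `P(t,0) = 0`,
`u(t,·), ∂ₓu(t,·) ∈ L²(ℝ)` and decay of `u, ∂ₓu, P, ∂ₓP` as `x → ±∞`.
The functions `ut, ux, uxx, Px, Pxx` are the indicated partial derivatives. -/
structure ViscousSPELine (γ ε : ℝ) (u P ut ux uxx Px Pxx : ℝ → ℝ → ℝ) : Prop where
  hut : ∀ t x : ℝ, HasDerivAt (fun τ => u τ x) (ut t x) t
  hux : ∀ t x : ℝ, HasDerivAt (fun y => u t y) (ux t x) x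
  huxx : ∀ t x : ℝ, HasDerivAt (fun y => ux t y) (uxx t x) x
  hPx : ∀ t x : ℝ, HasDerivAt (fun y => P t y) (Px t x) x
  hPxx : ∀ t x : ℝ, HasDerivAt (fun y => Px t y) (Pxx t x) x
  hequ : ∀ t > (0:ℝ), ∀ x : ℝ,
    ut t x - 1 / 2 * (u t x) ^ 2 * ux t x = γ * P t x + ε * uxx t x
  heqP : ∀ t > (0:ℝ), ∀ x : ℝ, -ε * Pxx t x + Px t x = u t x
  hbP : ∀ t : ℝ, P t 0 = 0
  huL2 : ∀ t > (0:ℝ), MeasureTheory.Integrable (fun x => (u t x) ^ 2)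
  huxL2 : ∀ t > (0:ℝ), MeasureTheory.Integrable (fun x => (ux t x) ^ 2)
  hdu_top : ∀ t > (0:ℝ), Filter.Tendsto (fun x => u t x) Filter.atTop (nhds 0)
  hdu_bot : ∀ t > (0:ℝ), Filter.Tendsto (fun x => u t x) Filter.atBot (nhds 0)
  hdux_top : ∀ t > (0:ℝ), Filter.Tendsto (fun x => ux t x) Filter.atTop (nhds 0)
  hdux_bot : ∀ t > (0:ℝ), Filter.Tendsto (fun x => ux t x) Filter.atBot (nhds 0)
  hdP_top : ∀ t > (0:ℝ), Filter.Tendsto (fun x => P t x) Filter.atTop (nhds 0)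
  hdP_bot : ∀ t > (0:ℝ), Filter.Tendsto (fun x => P t x) Filter.atBot (nhds 0)
  hdPx_top : ∀ t > (0:ℝ), Filter.Tendsto (fun x => Px t x) Filter.atTop (nhds 0)
  hdPx_bot : ∀ t > (0:ℝ), Filter.Tendsto (fun x => Px t x) Filter.atBot (nhds 0)

theorem intervalIntegral_le_sub_add_integral_of_le_deriv_add {f g H H' : ℝ → ℝ} {a b : ℝ}
    (hab : a ≤ b) (hH : ∀ x, HasDerivAt H (H' x) x) (hle : ∀ x, f x ≤ H' x + g x)
    (hf : IntervalIntegrable f volume a b) (hg : IntervalIntegrable g volume a b) :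
    ∫ x in a..b, f x ≤ H b - H a + ∫ x in a..b, g x := by
  have key : ∫ x in a..b, (f x - g x) ≤ H b - H a :=
    intervalIntegral.integral_le_sub_of_hasDeriv_right_of_le hab
      (fun x _ => (hH x).continuousAt.continuousWithinAt) (fun x _ => (hH x).hasDerivWithinAt)
      ((intervalIntegrable_iff_integrableOn_Icc_of_le hab).1 (hf.sub hg))
      (fun x _ => by linarith [hle x])
  rw [intervalIntegral.integral_sub hf hg] at key
  linarith

theorem le_integral_of_nonneg_deriv_add {g H H' : ℝ → ℝ} (hH : ∀ x, HasDerivAt H (H' x) x)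
    (hle : ∀ x, 0 ≤ H' x + g x) (hg : Integrable g) (hg0 : 0 ≤ g)
    (htop : Tendsto H atTop (nhds 0)) (x : ℝ) : H x ≤ ∫ y, g y := by
  have hbound : ∀ X, x ≤ X → H x ≤ H X + ∫ y, g y := by
    intro X hxX
    have hFTC := intervalIntegral_le_sub_add_integral_of_le_deriv_add (f := 0) hxX hH hle
      intervalIntegrable_const hg.intervalIntegrable
    have htail : ∫ y in x..X, g y ≤ ∫ y, g y := by
      rw [intervalIntegral.integral_of_le hxX]
      exact setIntegral_le_integral hg (Eventually.of_forall hg0)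
    simp only [Pi.zero_apply, intervalIntegral.integral_zero] at hFTC
    linarith
  have hlim : Tendsto (fun X => H X + ∫ y, g y) atTop (nhds (∫ y, g y)) := by
    simpa using htop.add_const (∫ y, g y)
  exact ge_of_tendsto hlim ((eventually_ge_atTop x).mono hbound)

theorem integral_le_integral_of_le_deriv_add {f g H H' : ℝ → ℝ}
    (hH : ∀ x, HasDerivAt H (H' x) x) (hle : ∀ x, f x ≤ H' x + g x)
    (hf : Integrable f) (hg : Integrable g)
    (htop : Tendsto H atTop (nhds 0)) (hbot : Tendsto H atBot (nhds 0)) :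
    ∫ x, f x ≤ ∫ x, g x := by
  have hneg : Tendsto (fun X : ℝ => -X) atTop atBot := tendsto_neg_atTop_atBot
  have hrhs : Tendsto (fun X => H X - H (-X) + ∫ x in (-X)..X, g x) atTop (nhds (∫ x, g x)) := by
    simpa using (htop.sub (hbot.comp hneg)).add (intervalIntegral_tendsto_integral hg hneg tendsto_id)
  refine le_of_tendsto_of_tendsto (intervalIntegral_tendsto_integral hf hneg tendsto_id) hrhs ?_
  filter_upwards [eventually_ge_atTop 0] with X hX
  exact intervalIntegral_le_sub_add_integral_of_le_deriv_add (neg_le_self hX) hH hle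
    hf.intervalIntegrable hg.intervalIntegrable

theorem tendsto_intervalIntegral_neg_self_of_hasDerivAt {f Q : ℝ → ℝ}
    (hQ : ∀ x, HasDerivAt Q (f x) x) (hf : Continuous f)
    (htop : Tendsto Q atTop (nhds 0)) (hbot : Tendsto Q atBot (nhds 0)) :
    Tendsto (fun X => ∫ x in (-X)..X, f x) atTop (nhds 0) := by
  have hlim : Tendsto (fun X => Q X - Q (-X)) atTop (nhds 0) := by
    simpa using htop.sub (hbot.comp tendsto_neg_atTop_atBot)
  refine hlim.congr fun X => ?_
  exact (intervalIntegral.integral_eq_sub_of_hasDerivAt (fun x _ => hQ x)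
    (hf.intervalIntegrable _ _)).symm

section SecondOrderODE

variable {ε : ℝ} {u p p' p'' : ℝ → ℝ}

theorem hasDerivAt_sub_mul_deriv (hp : ∀ x, HasDerivAt p (p' x) x)
    (hp' : ∀ x, HasDerivAt p' (p'' x) x) (heq : ∀ x, -ε * p'' x + p' x = u x) (x : ℝ) :
    HasDerivAt (fun y => p y - ε * p' y) (u x) x := by
  have hd : HasDerivAt (fun y => p y - ε * p' y) _ x := (hp x).sub ((hp' x).const_mul ε)
  convert hd using 1
  linear_combination -heq x

theorem hasDerivAt_mul_deriv_sq (hp' : ∀ x, HasDerivAt p' (p'' x) x)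
    (heq : ∀ x, -ε * p'' x + p' x = u x) (x : ℝ) :
    HasDerivAt (fun y => ε * p' y ^ 2) (2 * p' x * (p' x - u x)) x := by
  have hd : HasDerivAt (fun y => ε * p' y ^ 2) _ x := ((hp' x).pow 2).const_mul ε
  convert hd using 1
  push_cast
  linear_combination 2 * p' x * heq x

theorem hasDerivAt_energy (hp : ∀ x, HasDerivAt p (p' x) x)
    (hp' : ∀ x, HasDerivAt p' (p'' x) x) (heq : ∀ x, -ε * p'' x + p' x = u x) (x : ℝ) :
    HasDerivAt (fun y => p y ^ 2 / 2 - ε * (p' y * p y) + ε ^ 2 * p' y ^ 2)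
      (u x * p x + ε * p' x ^ 2 - 2 * ε * p' x * u x) x := by
  have hd : HasDerivAt (fun y => p y ^ 2 / 2 - ε * (p' y * p y) + ε ^ 2 * p' y ^ 2) _ x :=
    ((((hp x).pow 2).div_const 2).sub (((hp' x).mul (hp x)).const_mul ε)).add
      (((hp' x).pow 2).const_mul (ε ^ 2))
  convert hd using 1
  push_cast
  linear_combination (2 * ε * p' x - p x) * heq x

theorem mul_deriv_sq_le_integral_sq (hp' : ∀ x, HasDerivAt p' (p'' x) x)
    (heq : ∀ x, -ε * p'' x + p' x = u x) (hu : Integrable fun x => u x ^ 2)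
    (htop : Tendsto p' atTop (nhds 0)) (x : ℝ) :
    ε * p' x ^ 2 ≤ ∫ y, u y ^ 2 := by
  have hlim : Tendsto (fun y => ε * p' y ^ 2) atTop (nhds 0) := by
    simpa using (htop.pow 2).const_mul ε
  refine le_integral_of_nonneg_deriv_add (hasDerivAt_mul_deriv_sq hp' heq) (fun y => ?_) hu
    (fun y => sq_nonneg (u y)) hlim x
  nlinarith [sq_nonneg (p' y - u y), sq_nonneg (p' y)]

theorem integral_mul_le_mul_integral_sq (hε : 0 ≤ ε) (hp : ∀ x, HasDerivAt p (p' x) x)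
    (hp' : ∀ x, HasDerivAt p' (p'' x) x) (heq : ∀ x, -ε * p'' x + p' x = u x)
    (hu : Integrable fun x => u x ^ 2)
    (hp_top : Tendsto p atTop (nhds 0)) (hp_bot : Tendsto p atBot (nhds 0))
    (hp'_top : Tendsto p' atTop (nhds 0)) (hp'_bot : Tendsto p' atBot (nhds 0)) :
    ∫ x, u x * p x ≤ ε * ∫ x, u x ^ 2 := by
  by_cases hup : Integrable fun x => u x * p x
  · have hlim : ∀ {l : Filter ℝ}, Tendsto p l (nhds 0) → Tendsto p' l (nhds 0) →
        Tendsto (fun y => p y ^ 2 / 2 - ε * (p' y * p y) + ε ^ 2 * p' y ^ 2) l (nhds 0) :=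
      fun hp hp' => by
        simpa using (((hp.pow 2).div_const 2).sub ((hp'.mul hp).const_mul ε)).add
          ((hp'.pow 2).const_mul (ε ^ 2))
    rw [← integral_const_mul]
    refine integral_le_integral_of_le_deriv_add (hasDerivAt_energy hp hp' heq) (fun x => ?_)
      hup (hu.const_mul ε) (hlim hp_top hp'_top) (hlim hp_bot hp'_bot)
    nlinarith [mul_nonneg hε (sq_nonneg (p' x - u x))]
  · -- the Bochner integral of a non-integrable function is `0`
    rw [integral_undef hup]
    exact mul_nonneg hε (integral_nonneg fun x => sq_nonneg _)

end SecondOrderODE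

theorem viscous_SPE_realline_basic_general
    (γ ε : ℝ) (hε : ε ∈ Set.Ioo (0:ℝ) 1)
    (u P ut ux uxx Px Pxx : ℝ → ℝ → ℝ)
    (h : ViscousSPELine γ ε u P ut ux uxx Px Pxx) :
    ∀ t > (0:ℝ),
      Tendsto (fun X : ℝ => ∫ x in (-X)..X, u t x) atTop (nhds 0) ∧
      (∀ x : ℝ, Real.sqrt ε * |Px t x| ≤ Real.sqrt (∫ y : ℝ, (u t y) ^ 2)) ∧
      (∫ x : ℝ, u t x * P t x) ≤ ∫ x : ℝ, (u t x) ^ 2 := by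
  intro t ht
  have hP := h.hPx t
  have hPx := h.hPxx t
  have heq := h.heqP t ht
  have hu := h.huL2 t ht
  refine ⟨?_, fun x => ?_, ?_⟩
  · have hQ := hasDerivAt_sub_mul_deriv hP hPx heq
    exact tendsto_intervalIntegral_neg_self_of_hasDerivAt hQ
      (continuous_iff_continuousAt.2 fun x => (h.hux t x).differentiableAt.continuousAt)
      (by simpa using (h.hdP_top t ht).sub ((h.hdPx_top t ht).const_mul ε))
      (by simpa using (h.hdP_bot t ht).sub ((h.hdPx_bot t ht).const_mul ε))
  · rw [← Real.sqrt_sq_eq_abs, ← Real.sqrt_mul hε.1.le]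
    exact Real.sqrt_le_sqrt (mul_deriv_sq_le_integral_sq hPx heq hu (h.hdPx_top t ht) x)
  · calc ∫ x, u t x * P t x ≤ ε * ∫ x, u t x ^ 2 :=
          integral_mul_le_mul_integral_sq hε.1.le hP hPx heq hu (h.hdP_top t ht)
            (h.hdP_bot t ht) (h.hdPx_top t ht) (h.hdPx_bot t ht)
      _ ≤ ∫ x, u t x ^ 2 :=
          mul_le_of_le_one_left (integral_nonneg fun x => sq_nonneg _) hε.2.le

/-- For each `t > 0`: `∫_ℝ u_ε(t,x) dx = 0` (as the limit of
`∫_{-X}^X u_ε(t,x) dx`), `√ε ‖∂ₓP_ε(t,·)‖_{L∞(ℝ)} ≤ ‖u_ε(t,·)‖_{L²(ℝ)}`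
(stated pointwise), and `∫_ℝ u_ε P_ε dx ≤ ‖u_ε(t,·)‖²_{L²(ℝ)}`. -/
theorem viscous_SPE_realline_basic
    (γ ε : ℝ) (hγ : 0 < γ) (hε : ε ∈ Set.Ioo (0:ℝ) 1)
    (u P ut ux uxx Px Pxx : ℝ → ℝ → ℝ)
    (h : ViscousSPELine γ ε u P ut ux uxx Px Pxx) :
    ∀ t > (0:ℝ),
      Tendsto (fun X : ℝ => ∫ x in (-X)..X, u t x) atTop (nhds 0) ∧
      (∀ x : ℝ, Real.sqrt ε * |Px t x| ≤ Real.sqrt (∫ y : ℝ, (u t y) ^ 2)) ∧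
      (∫ x : ℝ, u t x * P t x) ≤ ∫ x : ℝ, (u t x) ^ 2 :=
  viscous_SPE_realline_basic_general γ ε hε u P ut ux uxx Px Pxx h
end
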